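/- Let P be a polytope in R^d with δB^d ⊆ P ⊆ B^d for some δ ∈ (0,1), and for each vertex u of P with ‖u‖ < 1 define ℓ_u(x) = h(u)·exp(−⟨u, x−u⟩/h(u)²), where h(u) = √(1−‖u‖²); for vertices with ‖u‖ = 1 define ℓ_u(x) = 0 if ⟨x,u⟩ ≥ 1 and +∞ otherwise. Let g̃ = min over vertices u of P of ℓ_u. Then for every x outside the polar body P°, g̃(x) ≤ e·exp(−‖x‖_{P°}). -/

import Mathlib

open scoped RealInnerProductSpace ENNReal

/-- The polar of a set `X ⊆ ℝ^d`. -/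
def polarSet {d : ℕ} (X : Set (EuclideanSpace ℝ (Fin d))) : Set (EuclideanSpace ℝ (Fin d)) :=
  {y | ∀ x ∈ X, (⟪x, y⟫ : ℝ) ≤ 1}

/-- The log-linear majorant `ℓ_u` tangent to the height function at `u`:
`ℓ_u(x) = h(u)·exp(-⟨u,x-u⟩/h(u)²)` for `‖u‖ < 1`, and for `‖u‖ = 1` it is `0` on
`{⟨x,u⟩ ≥ 1}` and `+∞` elsewhere. -/
noncomputable def ellFun {d : ℕ} (u x : EuclideanSpace ℝ (Fin d)) : ℝ≥0∞ :=
  if ‖u‖ < 1 then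
    ENNReal.ofReal (Real.sqrt (1 - ‖u‖ ^ 2) *
      Real.exp (-(⟪u, x - u⟫ : ℝ) / (1 - ‖u‖ ^ 2)))
  else if 1 ≤ (⟪x, u⟫ : ℝ) then 0 else ⊤

/-- A tail bound for the minimum of the log-linear functions `ℓ_u` over the vertices of a
polytope `P` with `δB^d ⊆ P ⊆ B^d`: outside the polar body `P°`, the minimum is at most
`e·exp(-‖x‖_{P°})`. -/
theorem tail_bound_min_log_linear (d : ℕ) (δ : ℝ) (hδ : δ ∈ Set.Ioo (0:ℝ) 1)
    (P : Set (EuclideanSpace ℝ (Fin d)))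
    (hpoly : ∃ V : Finset (EuclideanSpace ℝ (Fin d)), P = convexHull ℝ (V : Set _))
    (h1 : Metric.closedBall 0 δ ⊆ P) (h2 : P ⊆ Metric.closedBall 0 1)
    (x : EuclideanSpace ℝ (Fin d)) (hx : x ∉ polarSet P) :
    ⨅ u ∈ Set.extremePoints ℝ P, ellFun u x ≤
      ENNReal.ofReal (Real.exp 1 * Real.exp (-(gauge (polarSet P) x))) := by
  classical
  obtain ⟨V, hV⟩ := hpoly
  have hPconv : Convex ℝ P := hV ▸ convex_convexHull ℝ _
  have hPcomp : IsCompact P := hV ▸ (V.finite_toSet.isCompact_convexHull ℝ)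
  have hPne : P.Nonempty := ⟨0, h1 (by simp [hδ.1.le])⟩
  set E : Set (EuclideanSpace ℝ (Fin d)) := Set.extremePoints ℝ P with hE
  have hEV : E ⊆ (V : Set _) := by rw [hE, hV]; exact extremePoints_convexHull_subset
  have hEfin : E.Finite := V.finite_toSet.subset hEV
  have hEne : E.Nonempty := hPcomp.extremePoints_nonempty hPne
  -- P is the convex hull of its extreme points
  have hPE : convexHull ℝ E = P := by
    have hclosed : IsClosed (convexHull ℝ E) := (hEfin.isCompact_convexHull ℝ).isClosed
    have := closure_convexHull_extremePoints hPcomp hPconv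
    rwa [hclosed.closure_eq] at this
  set E' : Finset (EuclideanSpace ℝ (Fin d)) := hEfin.toFinset with hE'
  have hE'ne : E'.Nonempty := by simpa [hE'] using hEne
  set t : ℝ := E'.sup' hE'ne (fun v => (⟪v, x⟫ : ℝ)) with ht
  obtain ⟨u, huE', hut⟩ := E'.exists_mem_eq_sup' hE'ne (fun v => (⟪v, x⟫ : ℝ))
  have huE : u ∈ E := by simpa [hE'] using huE'
  have huP : u ∈ P := extremePoints_subset huE
  -- every point of P has inner product with x at most t
  have hAll : ∀ p ∈ P, (⟪p, x⟫ : ℝ) ≤ t := by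
    intro p hp
    have hsub : P ⊆ {y | (⟪y, x⟫ : ℝ) ≤ t} := by
      rw [← hPE]
      refine convexHull_min ?_ (convex_halfSpace_le ⟨fun a b => inner_add_left a b x,
        fun c a => real_inner_smul_left a x c⟩ t)
      intro v hv
      exact Finset.le_sup' (fun v => (⟪v, x⟫ : ℝ)) (by simpa [hE'] using hv)
    exact hsub hp
  -- t > 1
  have ht1 : 1 < t := by
    simp only [polarSet, Set.mem_setOf_eq, not_forall] at hx
    obtain ⟨p, hp, hpx⟩ := hx
    exact lt_of_lt_of_le (not_le.1 hpx) (hAll p hp)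
  have ht0 : 0 < t := lt_trans one_pos ht1
  -- gauge bound
  have hgauge : gauge (polarSet P) x ≤ t := by
    refine gauge_le_of_mem ht0.le ?_
    refine ⟨t⁻¹ • x, ?_, smul_inv_smul₀ ht0.ne' x⟩
    intro p hp
    rw [real_inner_smul_right]
    rw [inv_mul_le_iff₀ ht0, mul_one]
    exact hAll p hp
  -- reduce to the bound for ellFun u x
  have key : ellFun u x ≤ ENNReal.ofReal (Real.exp 1 * Real.exp (-t)) := by
    have hu1 : ‖u‖ ≤ 1 := by
      have := h2 huP
      rwa [Metric.mem_closedBall, dist_zero_right] at this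
    have hux : (⟪u, x⟫ : ℝ) = t := hut.symm
    by_cases hlt : ‖u‖ < 1
    · rw [ellFun, if_pos hlt]
      apply ENNReal.ofReal_le_ofReal
      have hs2 : ‖u‖ ^ 2 < 1 := by nlinarith [norm_nonneg u]
      have hden : (0:ℝ) < 1 - ‖u‖ ^ 2 := by linarith
      have hinner : (⟪u, x - u⟫ : ℝ) = t - ‖u‖ ^ 2 := by
        rw [inner_sub_right, hux, real_inner_self_eq_norm_sq]
      rw [hinner]
      have hsqrt : Real.sqrt (1 - ‖u‖ ^ 2) ≤ 1 := by
        have := Real.sqrt_le_sqrt (show 1 - ‖u‖ ^ 2 ≤ 1 by nlinarith [sq_nonneg ‖u‖])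
        rwa [Real.sqrt_one] at this
      have hexp : Real.exp (-(t - ‖u‖ ^ 2) / (1 - ‖u‖ ^ 2)) ≤ Real.exp (1 - t) := by
        apply Real.exp_le_exp.2
        rw [neg_div, neg_le, neg_sub]
        rw [le_div_iff₀ hden]
        nlinarith
      calc Real.sqrt (1 - ‖u‖ ^ 2) * Real.exp (-(t - ‖u‖ ^ 2) / (1 - ‖u‖ ^ 2))
          ≤ 1 * Real.exp (1 - t) := by
            exact mul_le_mul hsqrt hexp (Real.exp_pos _).le one_pos.le
        _ = Real.exp 1 * Real.exp (-t) := by rw [one_mul, ← Real.exp_add]; ring_nf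
    · rw [ellFun, if_neg hlt, if_pos]
      · exact zero_le
      · rw [real_inner_comm, hux]; linarith
  refine le_trans (iInf₂_le u huE) (le_trans key (ENNReal.ofReal_le_ofReal ?_))
  have := Real.exp_le_exp.2 (neg_le_neg hgauge)
  nlinarith [Real.exp_pos (1:ℝ)]
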